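/- In the special uniform case (all sensors initially on the barrier), if λ* > 0, then λ* equals the maximum of the finite set Λ' = {x_j + r − 2rj : 1 ≤ j ≤ n} ∪ {L − 2r(n−i) − (x_i + r) : 1 ≤ i ≤ n} ∪ {(x_j − x_i − 2r(j−i))/2 : 1 ≤ i < j ≤ n}. -/

import Mathlib

/-- Uniform case: placement `y` of sensors `1, …, n`, all with range `r`, covers `[0, L]`. -/
def Covers (n : ℕ) (L r : ℝ) (y : ℕ → ℝ) : Prop :=
  Set.Icc (0 : ℝ) L ⊆ ⋃ i ∈ Set.Icc 1 n, Set.Icc (y i - r) (y i + r)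

/-- The maximum movement `max_{1 ≤ i ≤ n} |x i - y i|` of the placement `y`. -/
noncomputable def MaxMove (n : ℕ) (x y : ℕ → ℝ) : ℝ :=
  sSup ((fun i => |x i - y i|) '' Set.Icc 1 n)

/-- `λ*`: the infimum of the maximum movement over all covering placements. -/
noncomputable def LamStar (n : ℕ) (L r : ℝ) (x : ℕ → ℝ) : ℝ :=
  sInf (MaxMove n x '' {y : ℕ → ℝ | Covers n L r y})

/-!
Every value in `Λ'` is a lower bound on the maximum movement of any cover: in each case some
interval of length `ℓ` of the barrier can only be reached by `m` sensors after moving by `λ`,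
so `ℓ ≤ 2rm` by comparing lengths. Conversely, for `λ ≥ 0` bounding `Λ'` from above, the greedy
placement that puts each sensor as far right as both its movement budget and the gap to its left
neighbour allow covers the barrier with maximum movement at most `λ`. Hence
`max Λ' ≤ λ* ≤ max (max Λ') 0`, which pins down `λ*` once it is positive.
-/

open Set MeasureTheory

/-- The set `Λ'`, verbatim from the statement. -/
def LamCandidates (n : ℕ) (L r : ℝ) (x : ℕ → ℝ) : Set ℝ :=
  {v : ℝ |
    (∃ j, 1 ≤ j ∧ j ≤ n ∧ v = x j + r - 2 * r * (j : ℝ)) ∨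
    (∃ i, 1 ≤ i ∧ i ≤ n ∧ v = L - 2 * r * ((n : ℝ) - (i : ℝ)) - (x i + r)) ∨
    (∃ i j, 1 ≤ i ∧ i < j ∧ j ≤ n ∧
      v = (x j - x i - 2 * r * ((j : ℝ) - (i : ℝ))) / 2)}

theorem LamCandidates.finite (n : ℕ) (L r : ℝ) (x : ℕ → ℝ) :
    (LamCandidates n L r x).Finite := by
  have hI := finite_Icc 1 n
  refine (((hI.image fun j : ℕ => x j + r - 2 * r * (j : ℝ)).union
    (hI.image fun i : ℕ => L - 2 * r * ((n : ℝ) - (i : ℝ)) - (x i + r))).union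
    ((hI.prod hI).image fun p : ℕ × ℕ =>
      (x p.2 - x p.1 - 2 * r * ((p.2 : ℝ) - (p.1 : ℝ))) / 2)).subset ?_
  rintro v (⟨j, h1, h2, rfl⟩ | ⟨i, h1, h2, rfl⟩ | ⟨i, j, h1, h2, h3, rfl⟩)
  · exact Or.inl (Or.inl ⟨j, ⟨h1, h2⟩, rfl⟩)
  · exact Or.inl (Or.inr ⟨i, ⟨h1, h2⟩, rfl⟩)
  · exact Or.inr ⟨(i, j), ⟨⟨h1, by omega⟩, ⟨by omega, h3⟩⟩, rfl⟩

theorem LamCandidates.nonempty {n : ℕ} (hn : 1 ≤ n) (L r : ℝ) (x : ℕ → ℝ) :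
    (LamCandidates n L r x).Nonempty :=
  ⟨_, Or.inl ⟨1, le_rfl, hn, rfl⟩⟩

section MaxMove

variable {n : ℕ} {x y : ℕ → ℝ}

theorem abs_sub_le_maxMove {i : ℕ} (h1 : 1 ≤ i) (h2 : i ≤ n) : |x i - y i| ≤ MaxMove n x y :=
  le_csSup ((finite_Icc 1 n).image _).bddAbove ⟨i, ⟨h1, h2⟩, rfl⟩

theorem maxMove_nonneg : 0 ≤ MaxMove n x y :=
  Real.sSup_nonneg <| by rintro _ ⟨i, -, rfl⟩; exact abs_nonneg _

theorem maxMove_le {c : ℝ} (hc : 0 ≤ c) (h : ∀ i, 1 ≤ i → i ≤ n → |x i - y i| ≤ c) :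
    MaxMove n x y ≤ c :=
  Real.sSup_le (by rintro _ ⟨i, hi, rfl⟩; exact h i hi.1 hi.2) hc

theorem lamStar_le_maxMove {L r : ℝ} (hy : Covers n L r y) : LamStar n L r x ≤ MaxMove n x y :=
  csInf_le ⟨0, by rintro _ ⟨_, _, rfl⟩; exact maxMove_nonneg⟩ ⟨y, hy, rfl⟩

end MaxMove

theorem sub_le_mul_card_of_Ioo_subset_biUnion {ι : Type*} (s : Finset ι) (c : ι → ℝ)
    {r a b : ℝ} (hr : 0 ≤ r) (h : Ioo a b ⊆ ⋃ i ∈ s, Icc (c i - r) (c i + r)) :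
    b - a ≤ 2 * r * s.card := by
  rcases le_or_gt b a with hba | hab
  · have : (0 : ℝ) ≤ 2 * r * s.card := by positivity
    linarith
  calc b - a = volume.real (Ioo a b) := (Real.volume_real_Ioo_of_le hab.le).symm
    _ ≤ volume.real (⋃ i ∈ s, Icc (c i - r) (c i + r)) :=
      measureReal_mono h (measure_biUnion_lt_top s.finite_toSet fun _ _ => measure_Icc_lt_top).ne
    _ ≤ ∑ i ∈ s, volume.real (Icc (c i - r) (c i + r)) := measureReal_biUnion_finset_le _ _
    _ = 2 * r * s.card := by
      rw [Finset.sum_congr rfl fun i _ => (Real.volume_real_Icc_of_le (by linarith)).trans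
        (by ring : c i + r - (c i - r) = 2 * r), Finset.sum_const, nsmul_eq_mul]
      ring

section Lower

variable {n : ℕ} {L r : ℝ} {x y : ℕ → ℝ}

theorem sub_le_of_covers (hr : 0 ≤ r) (hy : Covers n L r y) {i j : ℕ} (hij : i < j) {a b : ℝ}
    (ha : 0 ≤ a) (hb : b ≤ L) (hleft : ∀ k, 1 ≤ k → k ≤ i → y k + r ≤ a)
    (hright : ∀ k, j ≤ k → k ≤ n → b ≤ y k - r) :
    b - a ≤ 2 * r * ((j : ℝ) - i - 1) := by
  have hsub : Ioo a b ⊆ ⋃ k ∈ Finset.Ioo i j, Icc (y k - r) (y k + r) := by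
    intro t ht
    obtain ⟨k, ⟨hk1, hkn⟩, htk⟩ := mem_iUnion₂.mp (hy ⟨ha.trans ht.1.le, ht.2.le.trans hb⟩)
    have hik : i < k := by
      by_contra! hki
      linarith [hleft k hk1 hki, htk.2, ht.1]
    have hkj : k < j := by
      by_contra! hjk
      linarith [hright k hjk hkn, htk.1, ht.2]
    exact mem_biUnion (Finset.mem_Ioo.mpr ⟨hik, hkj⟩) htk
  have hcard : ((Finset.Ioo i j).card : ℝ) = j - i - 1 := by
    rw [Nat.card_Ioo, Nat.sub_sub, Nat.cast_sub (by omega)]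
    push_cast
    ring
  have hlen := sub_le_mul_card_of_Ioo_subset_biUnion _ y hr hsub
  rwa [hcard] at hlen

theorem le_maxMove_of_mem_lamCandidates (hr : 0 ≤ r)
    (hsort : ∀ i j, 1 ≤ i → i ≤ j → j ≤ n → x i ≤ x j)
    (hon : ∀ i, 1 ≤ i → i ≤ n → x i ∈ Icc (0 : ℝ) L)
    (hy : Covers n L r y) {v : ℝ} (hv : v ∈ LamCandidates n L r x) : v ≤ MaxMove n x y := by
  set lam := MaxMove n x y
  have hlam : 0 ≤ lam := maxMove_nonneg
  have hlo : ∀ k, 1 ≤ k → k ≤ n → x k - lam ≤ y k := fun k h1 h2 => by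
    linarith [(abs_le.mp (abs_sub_le_maxMove (x := x) (y := y) h1 h2)).2]
  have hhi : ∀ k, 1 ≤ k → k ≤ n → y k ≤ x k + lam := fun k h1 h2 => by
    linarith [(abs_le.mp (abs_sub_le_maxMove (x := x) (y := y) h1 h2)).1]
  rcases hv with ⟨j, hj1, hjn, rfl⟩ | ⟨i, hi1, hin, rfl⟩ | ⟨i, j, hi1, hij, hjn, rfl⟩
  · have := sub_le_of_covers hr hy (i := 0) (j := j) (by omega) (a := 0) (b := x j - lam - r) le_rfl
      (by linarith [(hon j hj1 hjn).2]) (fun k hk1 hk0 => by omega)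
      (fun k hjk hkn => by linarith [hsort j k hj1 hjk hkn, hlo k (by omega) hkn])
    push_cast at this
    linarith
  · have := sub_le_of_covers hr hy (i := i) (j := n + 1) (by omega) (a := x i + lam + r) (b := L)
      (by linarith [(hon i hi1 hin).1])
      le_rfl (fun k hk1 hki => by linarith [hsort k i hk1 hki hin, hhi k hk1 (by omega)])
      (fun k hk hkn => by omega)
    push_cast at this
    linarith
  · have := sub_le_of_covers hr hy hij (a := x i + lam + r) (b := x j - lam - r)
      (by linarith [(hon i hi1 (by omega)).1])
      (by linarith [(hon j (by omega) hjn).2])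
      (fun k hk1 hki => by linarith [hsort k i hk1 hki (by omega), hhi k hk1 (by omega)])
      (fun k hjk hkn => by linarith [hsort j k (by omega) hjk hkn, hlo k (by omega) hkn])
    linarith

theorem le_lamStar (hr : 0 ≤ r) (hsort : ∀ i j, 1 ≤ i → i ≤ j → j ≤ n → x i ≤ x j)
    (hon : ∀ i, 1 ≤ i → i ≤ n → x i ∈ Icc (0 : ℝ) L) (hcov : ∃ y, Covers n L r y) {v : ℝ}
    (hv : v ∈ LamCandidates n L r x) : v ≤ LamStar n L r x := by
  obtain ⟨y, hy⟩ := hcov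
  refine le_csInf ⟨_, y, hy, rfl⟩ ?_
  rintro _ ⟨y', hy', rfl⟩
  exact le_maxMove_of_mem_lamCandidates hr hsort hon hy' hv

end Lower

theorem covers_of_chain {n : ℕ} {L r : ℝ} {y : ℕ → ℝ} (hn : 1 ≤ n) (hstart : y 0 + r ≤ 0)
    (hend : L ≤ y n + r) (hstep : ∀ i < n, y (i + 1) ≤ y i + 2 * r) : Covers n L r y := by
  classical
  rintro t ⟨ht0, htL⟩
  have hP : ∃ m, m + 1 ≤ n ∧ t ≤ y (m + 1) + r :=
    ⟨n - 1, by omega, by rw [Nat.sub_add_cancel hn]; linarith⟩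
  obtain ⟨m, ⟨hmn, htm⟩, hmin⟩ : ∃ m, (m + 1 ≤ n ∧ t ≤ y (m + 1) + r) ∧
      ∀ k < m, ¬(k + 1 ≤ n ∧ t ≤ y (k + 1) + r) :=
    ⟨Nat.find hP, Nat.find_spec hP, fun _ => Nat.find_min hP⟩
  have hprev : y m + r ≤ t := by
    cases m with
    | zero => linarith
    | succ k => exact (not_le.mp fun h => hmin k k.lt_succ_self ⟨by omega, h⟩).le
  exact mem_biUnion ⟨Nat.le_add_left 1 m, hmn⟩ ⟨by linarith [hstep m (by omega)], htm⟩

/-- Index `0` is a virtual sensor whose range ends at the left end `0` of the barrier. -/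
noncomputable def greedyPlacement (x : ℕ → ℝ) (r lam : ℝ) : ℕ → ℝ
  | 0 => -r
  | i + 1 => min (x (i + 1) + lam) (greedyPlacement x r lam i + 2 * r)

section Greedy

variable {n : ℕ} {L r lam : ℝ} {x : ℕ → ℝ}

theorem greedyPlacement_le_add {i : ℕ} (hi : 1 ≤ i) : greedyPlacement x r lam i ≤ x i + lam := by
  obtain ⟨k, rfl⟩ := Nat.exists_eq_add_of_le' hi
  exact min_le_left _ _

theorem greedyPlacement_succ_le (i : ℕ) :
    greedyPlacement x r lam (i + 1) ≤ greedyPlacement x r lam i + 2 * r :=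
  min_le_right _ _

theorem le_greedyPlacement (hcap : L ≤ 2 * n * r) (hlam0 : 0 ≤ lam)
    (hlam : lam ∈ upperBounds (LamCandidates n L r x)) :
    ∀ i ≤ n, L - r - 2 * r * ((n : ℝ) - i) ≤ greedyPlacement x r lam i ∧
      ∀ j, i ≤ j → 1 ≤ j → j ≤ n →
        x j - lam - 2 * r * ((j : ℝ) - i) ≤ greedyPlacement x r lam i := by
  intro i
  induction i with
  | zero =>
    intro _
    simp only [greedyPlacement, Nat.cast_zero]
    refine ⟨by linarith, fun j _ hj1 hjn => ?_⟩
    linarith [hlam (Or.inl ⟨j, hj1, hjn, rfl⟩)]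
  | succ i ih =>
    intro hin
    obtain ⟨ihL, ihx⟩ := ih (by omega)
    simp only [greedyPlacement]
    push_cast
    refine ⟨le_min ?_ (by linarith), fun j hij _ hjn => le_min ?_ ?_⟩
    · have := hlam (Or.inr (Or.inl ⟨i + 1, by omega, hin, rfl⟩))
      push_cast at this
      linarith
    · rcases hij.eq_or_lt with rfl | hij
      · push_cast
        linarith
      · have := hlam (Or.inr (Or.inr ⟨i + 1, j, by omega, hij, hjn, rfl⟩))
        push_cast at this
        linarith
    · linarith [ihx j (by omega) (by omega) hjn]

theorem covers_greedyPlacement (hn : 1 ≤ n) (hcap : L ≤ 2 * n * r) (hlam0 : 0 ≤ lam)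
    (hlam : lam ∈ upperBounds (LamCandidates n L r x)) :
    Covers n L r (greedyPlacement x r lam) :=
  covers_of_chain hn (by simp [greedyPlacement])
    (by linarith [(le_greedyPlacement hcap hlam0 hlam n le_rfl).1])
    fun i _ => greedyPlacement_succ_le i

theorem maxMove_greedyPlacement_le (hcap : L ≤ 2 * n * r) (hlam0 : 0 ≤ lam)
    (hlam : lam ∈ upperBounds (LamCandidates n L r x)) :
    MaxMove n x (greedyPlacement x r lam) ≤ lam :=
  maxMove_le hlam0 fun i hi1 hin => abs_le.mpr
    ⟨by linarith [greedyPlacement_le_add (x := x) (r := r) (lam := lam) hi1],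
      by linarith [(le_greedyPlacement hcap hlam0 hlam i hin).2 i le_rfl hi1 hin]⟩

end Greedy

theorem stmt12_general (n : ℕ) (hn : 1 ≤ n) (L r : ℝ) (hr : 0 < r)
    (x : ℕ → ℝ) (hsort : ∀ i j, 1 ≤ i → i ≤ j → j ≤ n → x i ≤ x j)
    (hcap : L ≤ 2 * n * r)
    (hon : ∀ i, 1 ≤ i → i ≤ n → x i ∈ Set.Icc (0 : ℝ) L)
    (hlam : 0 < LamStar n L r x) :
    IsGreatest {v : ℝ |
        (∃ j, 1 ≤ j ∧ j ≤ n ∧ v = x j + r - 2 * r * (j : ℝ)) ∨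
        (∃ i, 1 ≤ i ∧ i ≤ n ∧ v = L - 2 * r * ((n : ℝ) - (i : ℝ)) - (x i + r)) ∨
        (∃ i j, 1 ≤ i ∧ i < j ∧ j ≤ n ∧
          v = (x j - x i - 2 * r * ((j : ℝ) - (i : ℝ))) / 2)}
      (LamStar n L r x) := by
  change IsGreatest (LamCandidates n L r x) _
  obtain ⟨M, hM, hMmax⟩ := (LamCandidates n L r x).exists_max_image id
    (LamCandidates.finite n L r x) (LamCandidates.nonempty hn L r x)
  have hub : max M 0 ∈ upperBounds (LamCandidates n L r x) :=
    fun v hv => (hMmax v hv).trans (le_max_left _ _)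
  have hcov := covers_greedyPlacement hn hcap (le_max_right _ _) hub
  have hupper : LamStar n L r x ≤ max M 0 :=
    (lamStar_le_maxMove hcov).trans (maxMove_greedyPlacement_le hcap (le_max_right _ _) hub)
  have hlamM : LamStar n L r x = M :=
    le_antisymm ((le_max_iff.mp hupper).resolve_right hlam.not_ge)
      (le_lamStar hr.le hsort hon ⟨_, hcov⟩ hM)
  exact hlamM ▸ ⟨hM, hMmax⟩

/-- Special uniform case (all sensors initially on the barrier): if `λ* > 0`, then `λ*` is
the maximum of the set
`Λ' = {x j + r − 2rj : 1 ≤ j ≤ n} ∪ {L − 2r(n−i) − (x i + r) : 1 ≤ i ≤ n}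
   ∪ {(x j − x i − 2r(j−i))/2 : 1 ≤ i < j ≤ n}`. -/
theorem stmt12 (n : ℕ) (hn : 1 ≤ n) (L r : ℝ) (hL : 0 < L) (hr : 0 < r)
    (x : ℕ → ℝ) (hsort : ∀ i j, 1 ≤ i → i ≤ j → j ≤ n → x i ≤ x j)
    (hcap : L ≤ 2 * n * r)
    (hon : ∀ i, 1 ≤ i → i ≤ n → x i ∈ Set.Icc (0 : ℝ) L)
    (hlam : 0 < LamStar n L r x) :
    IsGreatest {v : ℝ |
        (∃ j, 1 ≤ j ∧ j ≤ n ∧ v = x j + r - 2 * r * (j : ℝ)) ∨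
        (∃ i, 1 ≤ i ∧ i ≤ n ∧ v = L - 2 * r * ((n : ℝ) - (i : ℝ)) - (x i + r)) ∨
        (∃ i j, 1 ≤ i ∧ i < j ∧ j ≤ n ∧
          v = (x j - x i - 2 * r * ((j : ℝ) - (i : ℝ))) / 2)}
      (LamStar n L r x) :=
  stmt12_general n hn L r hr x hsort hcap hon hlam
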